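/- Let I(α) = ∫₀^α (√α/√(α−s)) (1+s²)^{-5/4} ds and J(α) = ∫₀^α (√α/√(α−s)) · s (1+s²)^{-5/4} ds for α > 0, let c₀ = ∫_{-∞}^{∞} (1+t²)^{-5/4} dt and c_* = 2/c₀. Then J(α)/(2 I(α)) → c_* as α → ∞. -/

import Mathlib

/-!
The kernel `√α / √(α - s)` tends to `1` pointwise as `α → ∞` and is at most `√2` for `s ≤ α / 2`,
so by dominated convergence the integral over `[0, α / 2]` tends to `∫₀^∞ g` for every `g`
integrable on `(0, ∞)`. On `[α / 2, α]` the kernel has total mass `√2 α`, so that piece vanishes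
as soon as `s g(s) → 0`. Both `(1 + s²)^(-5/4)` and `s (1 + s²)^(-5/4)` qualify, with integrals
`c₀ / 2` and `2`, hence `J / (2 I) → 2 / c₀`.
-/

open Real MeasureTheory Filter

/-- `I(α) = ∫₀^α (√α/√(α−s)) (1+s²)^{-5/4} ds`. -/
noncomputable def Ifun (α : ℝ) : ℝ :=
  ∫ s in (0:ℝ)..α, (Real.sqrt α / Real.sqrt (α - s)) * (1 + s ^ 2) ^ (-(5:ℝ)/4)

/-- `J(α) = ∫₀^α (√α/√(α−s)) · s (1+s²)^{-5/4} ds`. -/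
noncomputable def Jfun (α : ℝ) : ℝ :=
  ∫ s in (0:ℝ)..α, (Real.sqrt α / Real.sqrt (α - s)) * (s * (1 + s ^ 2) ^ (-(5:ℝ)/4))

/-- `c₀ = ∫_ℝ (1+t²)^{-5/4} dt`. -/
noncomputable def c₀ : ℝ := ∫ t : ℝ, (1 + t ^ 2) ^ (-(5:ℝ)/4)

/-- `c_* = 2/c₀`. -/
noncomputable def cstar : ℝ := 2 / c₀

open Set Topology

/-- Abel's integral operator, normalised by `√α` so that its kernel tends to `1` pointwise. -/
noncomputable def abelTransform (g : ℝ → ℝ) (α : ℝ) : ℝ :=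
  ∫ s in (0:ℝ)..α, √α / √(α - s) * g s

section AbelKernel

variable {α s : ℝ}

lemma measurable_abelKernel (α : ℝ) : Measurable fun s : ℝ => √α / √(α - s) := by
  fun_prop

lemma abelKernel_nonneg (α s : ℝ) : 0 ≤ √α / √(α - s) := by positivity

lemma abelKernel_le_sqrt_two (hα : 0 < α) (hs : s ≤ α / 2) : √α / √(α - s) ≤ √2 := by
  rw [div_le_iff₀ (Real.sqrt_pos.2 (by linarith)), ← Real.sqrt_mul zero_le_two]
  exact Real.sqrt_le_sqrt (by linarith)

lemma tendsto_abelKernel_atTop (s : ℝ) :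
    Tendsto (fun α => √α / √(α - s)) atTop (𝓝 1) := by
  have h : Tendsto (fun α => (√(1 - s / α))⁻¹) atTop (𝓝 1) := by
    simpa using ((tendsto_const_nhds.sub (tendsto_const_nhds.div_atTop tendsto_id)).sqrt).inv₀
      (by simp : √(1 - 0 : ℝ) ≠ 0)
  refine h.congr' ?_
  filter_upwards [eventually_gt_atTop 0] with α hα
  rw [show 1 - s / α = (α - s) / α by field_simp, Real.sqrt_div' _ hα.le, inv_div]

lemma continuousOn_abelKernel_lower_half (hα : 0 < α) :
    ContinuousOn (fun s => √α / √(α - s)) (uIcc 0 (α / 2)) := by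
  refine continuousOn_const.div (by fun_prop) fun s hs => ?_
  rw [uIcc_of_le (by linarith)] at hs
  exact (Real.sqrt_pos.2 (by linarith [hs.2])).ne'

lemma integral_abelKernel_upper_half (hα : 0 < α) :
    ∫ s in (α / 2)..α, √α / √(α - s) = √2 * α := by
  rw [intervalIntegral.integral_comp_sub_left (fun x => √α / √x) α, sub_self,
    show α - α / 2 = α / 2 by ring]
  have hrpow : EqOn (fun x => √α / √x) (fun x => √α * x ^ (-(1:ℝ) / 2)) (uIcc 0 (α / 2)) := by
    intro x hx
    rw [uIcc_of_le (by linarith)] at hx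
    simp only [div_eq_mul_inv, Real.sqrt_eq_rpow, ← Real.rpow_neg hx.1]
    norm_num
  rw [intervalIntegral.integral_congr hrpow, intervalIntegral.integral_const_mul,
    integral_rpow (Or.inl (by norm_num)), Real.zero_rpow (by norm_num),
    show -(1:ℝ) / 2 + 1 = 1 / 2 by norm_num, ← Real.sqrt_eq_rpow, Real.sqrt_div' _ zero_le_two]
  field_simp
  linear_combination 2 * Real.sq_sqrt hα.le - α * Real.sq_sqrt zero_le_two

lemma intervalIntegrable_abelKernel_upper_half (hα : 0 < α) :
    IntervalIntegrable (fun s => √α / √(α - s)) volume (α / 2) α :=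
  intervalIntegral.intervalIntegrable_of_integral_ne_zero <| by
    rw [integral_abelKernel_upper_half hα]; positivity

end AbelKernel

section UpperHalf

variable {g : ℝ → ℝ} {α B : ℝ}

lemma intervalIntegrable_abel_upper_half (hα : 0 < α)
    (hg : AEStronglyMeasurable g (volume.restrict (Ioc (α / 2) α)))
    (hB : ∀ s ∈ Ioc (α / 2) α, ‖g s‖ ≤ B) :
    IntervalIntegrable (fun s => √α / √(α - s) * g s) volume (α / 2) α := by
  have hk := intervalIntegrable_abelKernel_upper_half hα
  rw [intervalIntegrable_iff_integrableOn_Ioc_of_le (by linarith)] at hk ⊢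
  exact hk.mul_bdd hg (ae_restrict_of_forall_mem measurableSet_Ioc hB)

lemma norm_integral_abel_upper_half_le (hα : 0 < α) (hB : ∀ s ∈ Ioc (α / 2) α, ‖g s‖ ≤ B) :
    ‖∫ s in (α / 2)..α, √α / √(α - s) * g s‖ ≤ √2 * α * B := by
  calc ‖∫ s in (α / 2)..α, √α / √(α - s) * g s‖
      ≤ ∫ s in (α / 2)..α, √α / √(α - s) * B := by
        refine intervalIntegral.norm_integral_le_of_norm_le (by linarith)
          (Eventually.of_forall fun s hs => ?_)
          ((intervalIntegrable_abelKernel_upper_half hα).mul_const B)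
        rw [norm_mul, Real.norm_of_nonneg (abelKernel_nonneg α s)]
        exact mul_le_mul_of_nonneg_left (hB s hs) (abelKernel_nonneg α s)
    _ = √2 * α * B := by
        rw [intervalIntegral.integral_mul_const, integral_abelKernel_upper_half hα]

lemma eventually_norm_le_on_upper_half (hdecay : Tendsto (fun s => s * g s) atTop (𝓝 0))
    {ε : ℝ} (hε : 0 < ε) : ∀ᶠ α in atTop, ∀ s ∈ Ioc (α / 2) α, ‖g s‖ ≤ 2 * ε / α := by
  obtain ⟨S, hS⟩ := eventually_atTop.1 (hdecay.eventually (Metric.closedBall_mem_nhds 0 hε))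
  filter_upwards [eventually_ge_atTop (2 * S), eventually_gt_atTop 0] with α hαS hα s hs
  have hs0 : 0 < s := by linarith [hs.1]
  have hsg : s * ‖g s‖ ≤ ε := by
    simpa [abs_of_pos hs0] using hS s (by linarith [hs.1])
  rw [le_div_iff₀ hα]
  nlinarith [hs.1, norm_nonneg (g s)]

lemma tendsto_abel_upper_half_atTop (hdecay : Tendsto (fun s => s * g s) atTop (𝓝 0)) :
    Tendsto (fun α => ∫ s in (α / 2)..α, √α / √(α - s) * g s) atTop (𝓝 0) := by
  refine Metric.tendsto_nhds.2 fun δ hδ => ?_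
  filter_upwards [eventually_norm_le_on_upper_half hdecay (div_pos hδ four_pos),
    eventually_gt_atTop 0] with α hB hα
  have hsqrt : √2 < 2 := by
    rw [Real.sqrt_lt' two_pos]; norm_num
  calc dist (∫ s in (α / 2)..α, √α / √(α - s) * g s) 0
      ≤ √2 * α * (2 * (δ / 4) / α) := by
        rw [dist_zero_right]; exact norm_integral_abel_upper_half_le hα hB
    _ = √2 * (δ / 2) := by field_simp; ring
    _ < δ := by nlinarith

end UpperHalf

section LowerHalf

variable {g : ℝ → ℝ}

lemma intervalIntegrable_abel_lower_half {α : ℝ} (hα : 0 < α) (hint : IntegrableOn g (Ioi 0)) :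
    IntervalIntegrable (fun s => √α / √(α - s) * g s) volume 0 (α / 2) := by
  have hg : IntervalIntegrable g volume 0 (α / 2) :=
    (intervalIntegrable_iff_integrableOn_Ioc_of_le (by linarith)).2
      (hint.mono_set Ioc_subset_Ioi_self)
  exact hg.continuousOn_mul (continuousOn_abelKernel_lower_half hα)

lemma tendsto_abel_lower_half_atTop (hint : IntegrableOn g (Ioi 0)) :
    Tendsto (fun α => ∫ s in (0:ℝ)..(α / 2), √α / √(α - s) * g s) atTop
      (𝓝 (∫ s in Ioi 0, g s)) := by
  set F : ℝ → ℝ → ℝ := fun α => (Ioc 0 (α / 2)).indicator fun s => √α / √(α - s) * g s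
  have hF : Tendsto (fun α => ∫ s in Ioi 0, F α s) atTop (𝓝 (∫ s in Ioi 0, g s)) := by
    refine tendsto_integral_filter_of_dominated_convergence (fun s => √2 * ‖g s‖)
      (Eventually.of_forall fun α =>
        (((measurable_abelKernel α).aestronglyMeasurable.mul
          hint.aestronglyMeasurable).indicator measurableSet_Ioc)) ?_
      (hint.norm.const_mul _) ?_
    · filter_upwards [eventually_gt_atTop 0] with α hα
      refine Eventually.of_forall fun s => ?_
      simp only [F]
      by_cases hs : s ∈ Ioc 0 (α / 2)
      · rw [indicator_of_mem hs, norm_mul, Real.norm_of_nonneg (abelKernel_nonneg α s)]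
        exact mul_le_mul_of_nonneg_right (abelKernel_le_sqrt_two hα hs.2) (norm_nonneg _)
      · rw [indicator_of_notMem hs, norm_zero]
        positivity
    · refine (ae_restrict_iff' measurableSet_Ioi).2 (Eventually.of_forall fun s hs => ?_)
      have hlim := (tendsto_abelKernel_atTop s).mul_const (g s)
      rw [one_mul] at hlim
      refine hlim.congr' ?_
      filter_upwards [eventually_ge_atTop (2 * s)] with α hα
      simp only [F]
      rw [indicator_of_mem (show s ∈ Ioc 0 (α / 2) from ⟨hs, by linarith⟩)]
  refine hF.congr' ?_
  filter_upwards [eventually_ge_atTop 0] with α hα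
  rw [integral_indicator measurableSet_Ioc, Measure.restrict_restrict measurableSet_Ioc,
    inter_eq_self_of_subset_left Ioc_subset_Ioi_self,
    intervalIntegral.integral_of_le (by linarith)]

end LowerHalf

theorem tendsto_abelTransform_atTop {g : ℝ → ℝ} (hint : IntegrableOn g (Ioi 0))
    (hdecay : Tendsto (fun s => s * g s) atTop (𝓝 0)) :
    Tendsto (abelTransform g) atTop (𝓝 (∫ s in Ioi 0, g s)) := by
  have hsum := (tendsto_abel_lower_half_atTop hint).add (tendsto_abel_upper_half_atTop hdecay)
  rw [add_zero] at hsum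
  refine hsum.congr' ?_
  filter_upwards [eventually_norm_le_on_upper_half hdecay one_pos, eventually_gt_atTop 0]
    with α hB hα
  have hmeas : AEStronglyMeasurable g (volume.restrict (Ioc (α / 2) α)) :=
    (hint.mono_set (Ioc_subset_Ioi_self.trans (Ioi_subset_Ioi (by linarith)))).aestronglyMeasurable
  exact intervalIntegral.integral_add_adjacent_intervals
    (intervalIntegrable_abel_lower_half hα hint) (intervalIntegrable_abel_upper_half hα hmeas hB)

lemma integrable_one_add_sq_rpow : Integrable fun s : ℝ => (1 + s ^ 2) ^ (-(5:ℝ) / 4) := by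
  have h := integrable_rpow_neg_one_add_norm_sq (E := ℝ) (μ := volume) (r := 5 / 2)
    (by norm_num)
  convert h using 3 with s
  · rw [Real.norm_eq_abs, sq_abs]
  · norm_num

lemma tendsto_one_add_sq_rpow_neg_quarter :
    Tendsto (fun s : ℝ => (1 + s ^ 2) ^ (-(1:ℝ) / 4)) atTop (𝓝 0) := by
  have h := (tendsto_rpow_neg_atTop (y := 1 / 4) (by norm_num)).comp
    (tendsto_atTop_add_const_left _ 1 (tendsto_pow_atTop two_ne_zero))
  convert h using 3
  norm_num

lemma sq_mul_one_add_sq_rpow_le (s : ℝ) :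
    s ^ 2 * (1 + s ^ 2) ^ (-(5:ℝ) / 4) ≤ (1 + s ^ 2) ^ (-(1:ℝ) / 4) := by
  have hq : (0:ℝ) < 1 + s ^ 2 := by positivity
  calc s ^ 2 * (1 + s ^ 2) ^ (-(5:ℝ) / 4)
      ≤ (1 + s ^ 2) ^ (1:ℝ) * (1 + s ^ 2) ^ (-(5:ℝ) / 4) := by
        rw [Real.rpow_one]; gcongr; linarith
    _ = (1 + s ^ 2) ^ (-(1:ℝ) / 4) := by
        rw [← Real.rpow_add hq]; norm_num

lemma tendsto_sq_mul_one_add_sq_rpow :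
    Tendsto (fun s : ℝ => s * (s * (1 + s ^ 2) ^ (-(5:ℝ) / 4))) atTop (𝓝 0) := by
  refine squeeze_zero' (Eventually.of_forall fun s => ?_) (Eventually.of_forall fun s => ?_)
    tendsto_one_add_sq_rpow_neg_quarter
  · rw [← mul_assoc, ← sq]; positivity
  · rw [← mul_assoc, ← sq]; exact sq_mul_one_add_sq_rpow_le s

lemma tendsto_mul_one_add_sq_rpow :
    Tendsto (fun s : ℝ => s * (1 + s ^ 2) ^ (-(5:ℝ) / 4)) atTop (𝓝 0) := by
  refine squeeze_zero' ?_ ?_ tendsto_one_add_sq_rpow_neg_quarter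
  · filter_upwards [eventually_ge_atTop 0] with s hs
    positivity
  · filter_upwards [eventually_ge_atTop 1] with s hs
    calc s * (1 + s ^ 2) ^ (-(5:ℝ) / 4) ≤ s ^ 2 * (1 + s ^ 2) ^ (-(5:ℝ) / 4) := by
          gcongr; nlinarith
      _ ≤ _ := sq_mul_one_add_sq_rpow_le s

lemma hasDerivAt_one_add_sq_rpow_neg_quarter (s : ℝ) :
    HasDerivAt (fun x : ℝ => -2 * (1 + x ^ 2) ^ (-(1:ℝ) / 4))
      (s * (1 + s ^ 2) ^ (-(5:ℝ) / 4)) s := by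
  have hq : HasDerivAt (fun x : ℝ => 1 + x ^ 2) (2 * s) s := by
    simpa using (hasDerivAt_pow 2 s).const_add 1
  refine (((Real.hasDerivAt_rpow_const (p := -(1:ℝ) / 4)
    (Or.inl (by positivity : (1:ℝ) + s ^ 2 ≠ 0))).comp s hq).const_mul (-2 : ℝ)).congr_deriv ?_
  rw [show -(1:ℝ) / 4 - 1 = -(5:ℝ) / 4 by norm_num]
  ring

lemma integrableOn_and_integral_Ioi_mul_one_add_sq_rpow :
    IntegrableOn (fun s : ℝ => s * (1 + s ^ 2) ^ (-(5:ℝ) / 4)) (Ioi 0) ∧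
      ∫ s in Ioi (0:ℝ), s * (1 + s ^ 2) ^ (-(5:ℝ) / 4) = 2 := by
  have hcont : ContinuousWithinAt (fun x : ℝ => -2 * (1 + x ^ 2) ^ (-(1:ℝ) / 4)) (Ici 0) 0 :=
    (hasDerivAt_one_add_sq_rpow_neg_quarter 0).continuousAt.continuousWithinAt
  have hderiv := fun x (_ : x ∈ Ioi (0:ℝ)) => hasDerivAt_one_add_sq_rpow_neg_quarter x
  have hpos : ∀ x ∈ Ioi (0:ℝ), 0 ≤ x * (1 + x ^ 2) ^ (-(5:ℝ) / 4) := fun x hx => by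
    have : 0 < x := hx
    positivity
  have hlim : Tendsto (fun x : ℝ => -2 * (1 + x ^ 2) ^ (-(1:ℝ) / 4)) atTop (𝓝 0) := by
    simpa using tendsto_one_add_sq_rpow_neg_quarter.const_mul (-2 : ℝ)
  refine ⟨integrableOn_Ioi_deriv_of_nonneg hcont hderiv hpos hlim, ?_⟩
  rw [integral_Ioi_of_hasDerivAt_of_nonneg hcont hderiv hpos hlim]
  norm_num

lemma c₀_eq_two_mul_integral_Ioi : c₀ = 2 * ∫ s in Ioi (0:ℝ), (1 + s ^ 2) ^ (-(5:ℝ) / 4) := by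
  rw [c₀, ← integral_comp_abs (f := fun x => (1 + x ^ 2) ^ (-(5:ℝ) / 4))]
  simp only [sq_abs]

lemma c₀_pos : 0 < c₀ := by
  refine (integral_pos_iff_support_of_nonneg (fun s => by positivity)
    integrable_one_add_sq_rpow).2 ?_
  rw [Function.support_eq_univ fun s => (by positivity : (0:ℝ) < (1 + s ^ 2) ^ (-(5:ℝ) / 4)).ne']
  simp

lemma Ifun_eq_abelTransform : Ifun = abelTransform fun s => (1 + s ^ 2) ^ (-(5:ℝ) / 4) := rfl

lemma Jfun_eq_abelTransform :
    Jfun = abelTransform fun s => s * (1 + s ^ 2) ^ (-(5:ℝ) / 4) := rfl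

lemma tendsto_Ifun_atTop : Tendsto Ifun atTop (𝓝 (c₀ / 2)) := by
  rw [Ifun_eq_abelTransform]
  have h := tendsto_abelTransform_atTop integrable_one_add_sq_rpow.integrableOn
    tendsto_mul_one_add_sq_rpow
  rwa [show ∫ s in Ioi (0:ℝ), (1 + s ^ 2) ^ (-(5:ℝ) / 4) = c₀ / 2 by
    rw [c₀_eq_two_mul_integral_Ioi]; ring] at h

lemma tendsto_Jfun_atTop : Tendsto Jfun atTop (𝓝 2) := by
  obtain ⟨hint, hval⟩ := integrableOn_and_integral_Ioi_mul_one_add_sq_rpow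
  rw [Jfun_eq_abelTransform]
  have h := tendsto_abelTransform_atTop hint tendsto_sq_mul_one_add_sq_rpow
  rwa [hval] at h

/-- `J(α)/(2I(α)) → c_* = 2/c₀` as `α → ∞`. -/
theorem stmt_13 :
    Tendsto (fun α => Jfun α / (2 * Ifun α)) atTop (nhds cstar) := by
  have hc₀ := c₀_pos
  have h := tendsto_Jfun_atTop.div (tendsto_Ifun_atTop.const_mul 2) (by positivity)
  rwa [show 2 / (2 * (c₀ / 2)) = cstar by rw [cstar]; field_simp] at h
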